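/- Work in the ring S of formal power series over ℚ in four variables u, v, y, t. Let G ∈ S be the series whose coefficient of u^a v^ℓ y^b t^n equals the number of ascent sequences of length n with a ascents, last letter ℓ, and b equal pairs (coefficient of t^0 being 1). Set Δ_0 = Δ̄_0 = 1 and, for k ≥ 1, Δ_k = (1−ty)^k(1−u) + u(1+t−ty)^k, Δ̄_k = (1−ty)^k(1−uv) + uv(1+t−ty)^k, Γ_k = u(1+t−ty)^k Δ_k^{−1}, and Γ̄_k = uv(1+t−ty)^k Δ̄_k^{−1} (each Δ_k and Δ̄_k has constant term 1, hence is invertible in S). Let D = v − 1 − t − tyv + ty + tuv, which has constant term −1 and hence is invertible in S. Then G = 1 + t·D^{−1}·( (v−1) − t·Σ_{n≥0} (1−ty)^n (1+t−ty)^n [ (1−u)·Γ₁⋯Γ_n·Δ_n^{−1}Δ_{n+1}^{−1} − u v²(1−uv)·Γ̄₁⋯Γ̄_n·Δ̄_n^{−1}Δ̄_{n+1}^{−1} ] ), where the infinite sum is defined coefficientwise (the n-th summand is divisible by u^n, so each coefficient receives only finitely many contributions). -/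

import Mathlib

/-! Appending a letter `j ≤ asc(s) + 1` to an ascent sequence `s` changes its ascents, equal
pairs and last letter according only to how `j` compares with the last letter of `s`; summing the
resulting geometric series in `j` gives the functional equation
`K(w, z) F(w, z) = t (z - 1) - t F(w, 1) + t w z² F(w z, 1)` for the generating function `F` of
nonempty ascent sequences, with kernel `K(w, z) = z - 1 - t - t y z + t y + t w z`.
Let `Δ_k, Γ_k` be as in the statement with `u` replaced by `p ∈ {u, u v}`. Since
`Δ_{k+1} = (1 - t y) Δ_k + t p (1 + t - t y)^k`, the kernel vanishes at `w = Γ_k`,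
`z = V_k = (1 + t - t y) Δ_k / Δ_{k+1}`, and `Γ_k V_k = Γ_{k+1}`. So the equation expresses
`F(Γ_k, 1)` through `F(Γ_{k+1}, 1)`; iterating from `Γ_0 = p` and solving the equation at
`(w, z) = (u, v)` for `F(u, v)` gives the formula.
Everything is done on truncations: lengths `≤ M` and indices `n < N` determine the coefficients
of `t`-degree `M` and `u`-degree `< N`, as the discarded terms are multiples of `t^(M+1)` or `u^N`.
-/

/-- Number of ascents in an integer sequence. -/
def ascList (l : List ℕ) : ℕ :=
  (List.range (l.length - 1)).countP (fun j => decide (l.getD j 0 < l.getD (j + 1) 0))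

/-- Ascent sequence predicate. -/
def IsAscentSeq (l : List ℕ) : Prop :=
  l.getD 0 0 = 0 ∧ ∀ i, 0 < i → i < l.length → l.getD i 0 ≤ 1 + ascList (l.take i)

/-- Number of equal adjacent pairs. -/
def adjpairs (l : List ℕ) : ℕ :=
  (List.range (l.length - 1)).countP (fun j => decide (l.getD j 0 = l.getD (j + 1) 0))

/-- All runs of equal consecutive letters have length at most `k`
(no `k+1` consecutive equal entries). -/
def RunsAtMost (k : ℕ) (l : List ℕ) : Prop :=
  ¬ ∃ i, i + k < l.length ∧ ∀ j ≤ k, l.getD (i + j) 0 = l.getD i 0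

/-- Order-isomorphism of two partial orders on `Fin n`. -/
def PosetIso {n : ℕ} (P Q : PartialOrder (Fin n)) : Prop :=
  ∃ e : Fin n ≃ Fin n, ∀ a b, P.le a b ↔ Q.le (e a) (e b)

/-- The setoid of partial orders on `Fin n` satisfying `Φ`, up to isomorphism. -/
def posetSetoid (n : ℕ) (Φ : PartialOrder (Fin n) → Prop) :
    Setoid {P : PartialOrder (Fin n) // Φ P} where
  r P Q := PosetIso P.1 Q.1
  iseqv := by
    constructor
    · intro P
      exact ⟨Equiv.refl _, fun a b => Iff.rfl⟩
    · rintro P Q ⟨e, he⟩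
      refine ⟨e.symm, fun a b => ?_⟩
      simp only [he (e.symm a) (e.symm b), Equiv.apply_symm_apply]
    · rintro P Q R ⟨e, he⟩ ⟨f, hf⟩
      exact ⟨e.trans f, fun a b => (he a b).trans (hf (e a) (e b))⟩

/-- The number of isomorphism classes of partial orders on `n` elements satisfying `Φ`. -/
noncomputable def posetCount (n : ℕ) (Φ : PartialOrder (Fin n) → Prop) : ℕ :=
  Nat.card (Quotient (posetSetoid n Φ))

/-- A poset is (2+2)-free. -/
def TwoTwoFree {n : ℕ} (P : PartialOrder (Fin n)) : Prop :=
  ¬ ∃ a b c d : Fin n, P.lt a b ∧ P.lt c d ∧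
    ¬ P.le a c ∧ ¬ P.le c a ∧ ¬ P.le a d ∧ ¬ P.le d a ∧
    ¬ P.le b c ∧ ¬ P.le c b ∧ ¬ P.le b d ∧ ¬ P.le d b

/-- Two elements are indistinguishable: same strict down-set and same strict up-set. -/
def Indist {n : ℕ} (P : PartialOrder (Fin n)) (x y : Fin n) : Prop :=
  (∀ z, P.lt z x ↔ P.lt z y) ∧ (∀ z, P.lt x z ↔ P.lt y z)

/-- Indistinguishability as a setoid. -/
def indistSetoid {n : ℕ} (P : PartialOrder (Fin n)) : Setoid (Fin n) where
  r := Indist P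
  iseqv := ⟨fun _ => ⟨fun _ => Iff.rfl, fun _ => Iff.rfl⟩,
    fun h => ⟨fun z => (h.1 z).symm, fun z => (h.2 z).symm⟩,
    fun h h' => ⟨fun z => (h.1 z).trans (h'.1 z), fun z => (h.2 z).trans (h'.2 z)⟩⟩

/-- Size of the indistinguishability class of `x`. -/
noncomputable def classSize {n : ℕ} (P : PartialOrder (Fin n)) (x : Fin n) : ℕ :=
  Nat.card {y : Fin n // Indist P x y}

/-- `maxindist(P) ≤ k`: each indistinguishability class has size at most `k`. -/
def MaxindistLe {n : ℕ} (P : PartialOrder (Fin n)) (k : ℕ) : Prop :=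
  ∀ x : Fin n, classSize P x ≤ k

/-- No two distinct elements are indistinguishable. -/
def PrimitivePoset {n : ℕ} (P : PartialOrder (Fin n)) : Prop :=
  ∀ x y : Fin n, Indist P x y → x = y

/-- `rep(P)`: the minimum number of elements whose removal leaves an induced
subposet with no pair of distinct indistinguishable elements. -/
noncomputable def repStat {n : ℕ} (P : PartialOrder (Fin n)) : ℕ :=
  sInf {m | ∃ S : Finset (Fin n), S.card = m ∧
    ∀ x ∉ S, ∀ y ∉ S, Indist P x y → x = y}

/-- The strict down-set of `x`. -/
def downSet {n : ℕ} (P : PartialOrder (Fin n)) (x : Fin n) : Set (Fin n) :=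
  {z | P.lt z x}

/-- The level of `x`: the number of strict down-sets strictly contained in `D(x)`. -/
noncomputable def levelOf {n : ℕ} (P : PartialOrder (Fin n)) (x : Fin n) : ℕ :=
  {S : Set (Fin n) | (∃ z, S = downSet P z) ∧ S ⊂ downSet P x}.ncard

/-- `levels(P)`: index of the highest level. -/
noncomputable def levelsStat {n : ℕ} (P : PartialOrder (Fin n)) : ℕ :=
  {S : Set (Fin n) | ∃ z, S = downSet P z}.ncard - 1

/-- `x` is a maximal element. -/
def IsMaximal {n : ℕ} (P : PartialOrder (Fin n)) (x : Fin n) : Prop :=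
  ∀ z, ¬ P.lt x z

/-- `minmax(P)`: the minimum level of a maximal element. -/
noncomputable def minmaxStat {n : ℕ} (P : PartialOrder (Fin n)) : ℕ :=
  sInf {j | ∃ x, IsMaximal P x ∧ levelOf P x = j}

/-- Membership in `M_n`: upper triangular, no zero row or column, entries sum to `n`. -/
def InMatM (n : ℕ) (A : Σ d : ℕ, Matrix (Fin d) (Fin d) ℕ) : Prop :=
  (∀ i j : Fin A.1, (j : ℕ) < (i : ℕ) → A.2 i j = 0) ∧
  (∀ i : Fin A.1, ∃ j, A.2 i j ≠ 0) ∧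
  (∀ j : Fin A.1, ∃ i, A.2 i j ≠ 0) ∧
  (∑ i, ∑ j, A.2 i j) = n

/-- All entries are at most `k`. -/
def EntriesLe (k : ℕ) (A : Σ d : ℕ, Matrix (Fin d) (Fin d) ℕ) : Prop :=
  ∀ i j, A.2 i j ≤ k

/-- `index(A) - 1`: the least (0-based) row index with a nonzero entry in the last column. -/
noncomputable def matIndex0 (A : Σ d : ℕ, Matrix (Fin d) (Fin d) ℕ) : ℕ :=
  sInf {i : ℕ | ∃ (h : i < A.1) (h' : A.1 - 1 < A.1), A.2 ⟨i, h⟩ ⟨A.1 - 1, h'⟩ ≠ 0}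

/-- The number of nonzero entries of `A`. -/
noncomputable def matNZ (A : Σ d : ℕ, Matrix (Fin d) (Fin d) ℕ) : ℕ :=
  Nat.card {p : Fin A.1 × Fin A.1 // A.2 p.1 p.2 ≠ 0}

/-- Membership in `R_n`. -/
def InRset {n : ℕ} (π : Equiv.Perm (Fin n)) : Prop :=
  ¬ ∃ i j k : Fin n, (j : ℕ) = (i : ℕ) + 1 ∧ (i : ℕ) + 1 < (k : ℕ) ∧
    (π k : ℕ) < (π i : ℕ) ∧ (π i : ℕ) < (π j : ℕ) ∧ (π i : ℕ) = (π k : ℕ) + 1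

/-- No `k+1` consecutive letters, each one less than the previous. -/
def NoDescRun {n : ℕ} (k : ℕ) (π : Equiv.Perm (Fin n)) : Prop :=
  ¬ ∃ (i : ℕ) (h : i + k < n), ∀ j, ∀ hj : j ≤ k,
    (π ⟨i + j, by omega⟩ : ℕ) = (π ⟨i, by omega⟩ : ℕ) - j

/-- The number of descents by one: indices `i` with `π_i = π_{i+1} + 1`. -/
noncomputable def adjdes {n : ℕ} (π : Equiv.Perm (Fin n)) : ℕ :=
  Nat.card {i : ℕ // ∃ h : i + 1 < n,
    (π ⟨i, Nat.lt_of_succ_lt h⟩ : ℕ) = (π ⟨i + 1, h⟩ : ℕ) + 1}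

/-- A perfect matching, encoded as a fixed-point-free involution. -/
def IsMatching {m : ℕ} (f : Equiv.Perm (Fin m)) : Prop :=
  (∀ x, f (f x) = x) ∧ ∀ x, f x ≠ x

/-- The Stoimenow condition on a matching. -/
def IsStoimenow {m : ℕ} (f : Equiv.Perm (Fin m)) : Prop :=
  ¬ ∃ a c : Fin m, a < f a ∧ c < f c ∧
    (((a : ℕ) = (c : ℕ) + 1 ∧ f a < f c) ∨ ((a : ℕ) < (c : ℕ) ∧ (f a : ℕ) = (f c : ℕ) + 1))

/-- There are `i, j` such that `{i+l, j+l}` is an arc for every `l = 0, …, k`. -/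
def HasSimRun {m : ℕ} (k : ℕ) (f : Equiv.Perm (Fin m)) : Prop :=
  ∃ i j : ℕ, ∀ l ≤ k, ∃ (h1 : i + l < m) (h2 : j + l < m), f ⟨i + l, h1⟩ = ⟨j + l, h2⟩

/-- After removing the arcs with endpoints in `A`, no pair of similar arcs remains. -/
def SimilarFree {m : ℕ} (f : Equiv.Perm (Fin m)) (A : Finset (Fin m)) : Prop :=
  ¬ ∃ (i j : ℕ) (h1 : i < m) (h2 : j < m) (h3 : i + 1 < m) (h4 : j + 1 < m),
    f ⟨i, h1⟩ = ⟨j, h2⟩ ∧ f ⟨i + 1, h3⟩ = ⟨j + 1, h4⟩ ∧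
    (⟨i, h1⟩ : Fin m) ∉ A ∧ (⟨i + 1, h3⟩ : Fin m) ∉ A ∧
    (⟨j, h2⟩ : Fin m) ∉ A ∧ (⟨j + 1, h4⟩ : Fin m) ∉ A

/-- `echords(M)`: minimum number of arcs whose removal leaves no similar pair. -/
noncomputable def echords {m : ℕ} (f : Equiv.Perm (Fin m)) : ℕ :=
  sInf {c | ∃ A : Finset (Fin m), (∀ x ∈ A, f x ∈ A) ∧ A.card = 2 * c ∧ SimilarFree f A}


open Finset

def pairCount (r : ℕ → ℕ → Prop) [DecidableRel r] (l : List ℕ) : ℕ :=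
  (List.range (l.length - 1)).countP fun j => decide (r (l.getD j 0) (l.getD (j + 1) 0))

theorem ascList_eq_pairCount : ascList = pairCount (· < ·) := rfl

theorem adjpairs_eq_pairCount : adjpairs = pairCount (· = ·) := rfl

theorem pairCount_append_singleton (r : ℕ → ℕ → Prop) [DecidableRel r] {l : List ℕ}
    (hl : l ≠ []) (j : ℕ) :
    pairCount r (l ++ [j]) = pairCount r l + if r (l.getLastD 0) j then 1 else 0 := by
  obtain ⟨s, x, rfl⟩ := (List.eq_nil_or_concat' l).resolve_left hl
  have hget : ∀ i ≤ s.length, (s ++ [x] ++ [j]).getD i 0 = (s ++ [x]).getD i 0 :=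
    fun i hi => List.getD_append _ _ _ _ (by simp; omega)
  simp only [pairCount, List.length_append, List.length_singleton, Nat.add_sub_cancel,
    List.range_succ, List.countP_append, List.getLastD_concat]
  congr 1
  · exact List.countP_congr fun i hi => by
      rw [List.mem_range] at hi
      rw [hget i (by omega), hget (i + 1) (by omega)]
  · rw [List.countP_singleton, hget _ le_rfl]
    simp

theorem isAscentSeq_append_singleton {l : List ℕ} (hl : l ≠ []) (j : ℕ) :
    IsAscentSeq (l ++ [j]) ↔ IsAscentSeq l ∧ j ≤ 1 + ascList l := by
  have hpos : 0 < l.length := List.length_pos_iff.mpr hl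
  have hget : ∀ i < l.length, (l ++ [j]).getD i 0 = l.getD i 0 := List.getD_append _ _ _
  have htake : ∀ i ≤ l.length, (l ++ [j]).take i = l.take i := fun i hi =>
    List.take_append_of_le_length hi
  have hlast : (l ++ [j]).getD l.length 0 = j := by simp
  simp only [IsAscentSeq, List.length_append, List.length_singleton, hget 0 hpos]
  constructor
  · rintro ⟨h0, h⟩
    refine ⟨⟨h0, fun i hi hil => ?_⟩, ?_⟩
    · simpa only [hget i hil, htake i hil.le] using h i hi (by omega)
    · simpa only [hlast, htake _ le_rfl, List.take_length] using h l.length hpos (by omega)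
  · rintro ⟨⟨h0, h⟩, hj⟩
    refine ⟨h0, fun i hi hil => ?_⟩
    rcases Nat.lt_or_ge i l.length with hil' | hil'
    · simpa only [hget i hil', htake i hil'.le] using h i hi hil'
    · obtain rfl : i = l.length := by omega
      simpa only [hlast, htake _ le_rfl, List.take_length] using hj

theorem IsAscentSeq.getLastD_le {l : List ℕ} (h : IsAscentSeq l) :
    l.getLastD 0 ≤ ascList l + 1 := by
  obtain rfl | ⟨s, j, rfl⟩ := List.eq_nil_or_concat' l
  · simp
  obtain rfl | hs := eq_or_ne s []
  · simp only [IsAscentSeq, List.nil_append, List.getD_cons_zero] at h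
    simp [h.1]
  have hj := ((isAscentSeq_append_singleton hs j).1 h).2
  rw [List.getLastD_concat, ascList_eq_pairCount, pairCount_append_singleton _ hs]
  rw [ascList_eq_pairCount] at hj
  omega

def ascFinset : ℕ → Finset (List ℕ)
  | 0 => {[]}
  | 1 => {[0]}
  | n + 2 => ((ascFinset (n + 1)).sigma fun s => range (ascList s + 2)).image
      fun p => p.1 ++ [p.2]

theorem mem_ascFinset :
    ∀ {n : ℕ} {l : List ℕ}, l ∈ ascFinset n ↔ l.length = n ∧ IsAscentSeq l
  | 0, l => by
    simp only [ascFinset, mem_singleton, List.length_eq_zero_iff, iff_self_and]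
    rintro rfl
    exact ⟨rfl, by simp⟩
  | 1, l => by
    simp only [ascFinset, mem_singleton, List.length_eq_one_iff]
    constructor
    · rintro rfl
      exact ⟨⟨0, rfl⟩, rfl, by simp⟩
    · rintro ⟨⟨a, rfl⟩, h, -⟩
      simp_all
  | n + 2, l => by
    simp only [ascFinset, mem_image, mem_sigma, mem_range, mem_ascFinset]
    constructor
    · rintro ⟨⟨s, j⟩, ⟨⟨hs, has⟩, hj : j < ascList s + 2⟩, rfl⟩
      have hne : s ≠ [] := by rintro rfl; simp at hs
      exact ⟨by simp [hs], (isAscentSeq_append_singleton hne j).2 ⟨has, by omega⟩⟩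
    · rintro ⟨hl, ha⟩
      have hl0 : l ≠ [] := by rintro rfl; simp at hl
      obtain ⟨s, j, rfl⟩ := (List.eq_nil_or_concat' l).resolve_left hl0
      have hne : s ≠ [] := by rintro rfl; simp at hl
      obtain ⟨has, hj⟩ := (isAscentSeq_append_singleton hne j).1 ha
      have hj' : j < ascList s + 2 := by omega
      exact ⟨⟨s, j⟩, ⟨⟨by simpa using hl, has⟩, hj'⟩, rfl⟩

theorem sum_ascFinset_succ {M : Type*} [AddCommMonoid M] {n : ℕ} (hn : n ≠ 0)
    (f : List ℕ → M) :
    ∑ l ∈ ascFinset (n + 1), f l =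
      ∑ s ∈ ascFinset n, ∑ j ∈ range (ascList s + 2), f (s ++ [j]) := by
  obtain ⟨n, rfl⟩ := Nat.exists_eq_succ_of_ne_zero hn
  rw [ascFinset, sum_image, sum_sigma]
  rintro ⟨s, j⟩ - ⟨s', j'⟩ - h
  obtain ⟨rfl, hj⟩ := List.append_inj' h rfl
  simp_all

section GeneratingFunction

variable {R : Type*} [CommRing R]

def ascPoly (w z y : R) (n : ℕ) : R :=
  ∑ s ∈ ascFinset n, w ^ ascList s * z ^ s.getLastD 0 * y ^ adjpairs s

theorem ascPoly_zero (w z y : R) : ascPoly w z y 0 = 1 := by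
  simp [ascPoly, ascFinset, ascList_eq_pairCount, adjpairs_eq_pairCount, pairCount]

theorem ascPoly_one (w z y : R) : ascPoly w z y 1 = 1 := by
  simp [ascPoly, ascFinset, ascList_eq_pairCount, adjpairs_eq_pairCount, pairCount]

theorem sub_one_mul_sum_range_last_letter (w z y : R) {a ℓ : ℕ} (hℓ : ℓ ≤ a + 1) :
    (z - 1) * ∑ j ∈ range (a + 2),
        w ^ (if ℓ < j then 1 else 0) * z ^ j * y ^ (if ℓ = j then 1 else 0) =
      z ^ ℓ - 1 + y * (z - 1) * z ^ ℓ + w * (z ^ (a + 2) - z ^ (ℓ + 1)) := by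
  set f : ℕ → R := fun j =>
    w ^ (if ℓ < j then 1 else 0) * z ^ j * y ^ (if ℓ = j then 1 else 0)
  have hlow : (z - 1) * ∑ j ∈ range ℓ, f j = z ^ ℓ - 1 := by
    rw [sum_congr rfl fun j hj => show f j = z ^ j by
      simp [f, (mem_range.1 hj).not_gt, (mem_range.1 hj).ne'], mul_comm, geom_sum_mul]
  have hmid : f ℓ = y * z ^ ℓ := by simp [f, mul_comm]
  have hhigh :
      (z - 1) * ∑ j ∈ Ico (ℓ + 1) (a + 2), f j = w * (z ^ (a + 2) - z ^ (ℓ + 1)) := by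
    rw [sum_congr rfl fun j hj => show f j = w * z ^ j by
      have hj : ℓ < j := (mem_Ico.1 hj).1
      simp [f, hj, hj.ne], ← mul_sum, ← geom_sum_Ico_mul _ (by omega)]
    ring
  rw [← sum_range_add_sum_Ico _ (by omega : ℓ ≤ a + 2), sum_eq_sum_Ico_succ_bot (by omega)]
  linear_combination hlow + hhigh + (z - 1) * hmid

theorem sub_one_mul_ascPoly_succ (w z y : R) {n : ℕ} (hn : n ≠ 0) :
    (z - 1) * ascPoly w z y (n + 1) =
      ascPoly w z y n - ascPoly w 1 y n + y * (z - 1) * ascPoly w z y n +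
        w * z ^ 2 * ascPoly (w * z) 1 y n - w * z * ascPoly w z y n := by
  simp only [ascPoly, sum_ascFinset_succ hn, mul_sum, ← sum_sub_distrib, ← sum_add_distrib]
  refine sum_congr rfl fun s hs => ?_
  obtain ⟨hlen, has⟩ := mem_ascFinset.1 hs
  have hne : s ≠ [] := by rintro rfl; exact hn hlen.symm
  set a := ascList s
  set ℓ := s.getLastD 0
  set b := adjpairs s
  have hsum : ∑ j ∈ range (a + 2), w ^ ascList (s ++ [j]) * z ^ (s ++ [j]).getLastD 0 *
        y ^ adjpairs (s ++ [j]) =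
      w ^ a * y ^ b * ∑ j ∈ range (a + 2),
        w ^ (if ℓ < j then 1 else 0) * z ^ j * y ^ (if ℓ = j then 1 else 0) := by
    rw [mul_sum]
    refine sum_congr rfl fun j _ => ?_
    rw [ascList_eq_pairCount, adjpairs_eq_pairCount, pairCount_append_singleton _ hne,
      pairCount_append_singleton _ hne, List.getLastD_concat, ← ascList_eq_pairCount,
      ← adjpairs_eq_pairCount]
    ring
  rw [← mul_sum, hsum]
  linear_combination w ^ a * y ^ b * sub_one_mul_sum_range_last_letter w z y has.getLastD_le

def ascGF (t w z y : R) (M : ℕ) : R :=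
  ∑ n ∈ range M, t ^ (n + 1) * ascPoly w z y (n + 1)

theorem one_add_ascGF (t w z y : R) (M : ℕ) :
    1 + ascGF t w z y M = ∑ n ∈ range (M + 1), t ^ n * ascPoly w z y n := by
  rw [sum_range_succ', ascGF, ascPoly_zero, pow_zero, mul_one, add_comm]

theorem kernel_mul_ascGF (t w z y : R) (M : ℕ) :
    (z - 1 - t - t * y * z + t * y + t * w * z) * ascGF t w z y M =
      t * (z - 1) - t * ascGF t w 1 y M + t * w * z ^ 2 * ascGF t (w * z) 1 y M -
        (z - 1) * t ^ (M + 1) * ascPoly w z y (M + 1) := by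
  induction M with
  | zero =>
    simp only [ascGF, range_zero, sum_empty, zero_add, pow_one, ascPoly_one]
    ring
  | succ M ih =>
    simp only [ascGF, sum_range_succ] at ih ⊢
    linear_combination ih + t ^ (M + 2) * sub_one_mul_ascPoly_succ w z y M.add_one_ne_zero

/-- `hK` says that the kernel `K(w, 1 + t e) = t (e (1 - t y) + w (1 + t e) - 1)` vanishes. -/
theorem ascGF_eq_of_kernel {t : R} (ht : IsLeftRegular t) (y : R) {w e : R}
    (hK : e * (1 - t * y) + w * (1 + t * e) = 1) (M : ℕ) :
    ascGF t w 1 y M = t * e + w * (1 + t * e) ^ 2 * ascGF t (w * (1 + t * e)) 1 y M -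
      t ^ (M + 1) * (e * ascPoly w (1 + t * e) y (M + 1)) := by
  refine ht ?_
  linear_combination kernel_mul_ascGF t w (1 + t * e) y M -
    t * ascGF t w (1 + t * e) y M * hK

theorem ascGF_telescope {t : R} (ht : IsLeftRegular t) (y : R) (γ e : ℕ → R)
    (hγ : ∀ k, γ (k + 1) = γ k * (1 + t * e k))
    (hK : ∀ k, e k * (1 - t * y) + γ (k + 1) = 1) (M N : ℕ) :
    ∃ r, ascGF t (γ 0) 1 y M =
      ∑ n ∈ range N, (∏ k ∈ range n, γ k * (1 + t * e k) ^ 2) * (t * e n) +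
        (∏ k ∈ range N, γ k * (1 + t * e k) ^ 2) * ascGF t (γ N) 1 y M + t ^ (M + 1) * r := by
  induction N with
  | zero => exact ⟨0, by simp⟩
  | succ N ih =>
    obtain ⟨r, hr⟩ := ih
    have hstep := ascGF_eq_of_kernel ht y (hγ N ▸ hK N) M
    rw [← hγ] at hstep
    refine ⟨r - (∏ k ∈ range N, γ k * (1 + t * e k) ^ 2) *
      (e N * ascPoly (γ N) (1 + t * e N) y (M + 1)), ?_⟩
    rw [hr, hstep, sum_range_succ, prod_range_succ]
    ring

end GeneratingFunction

theorem MvPowerSeries.coeff_X_pow_mul_eq_zero {σ R : Type*} [CommSemiring R] {m : σ →₀ ℕ}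
    {i : σ} {k : ℕ} (h : m i < k) (φ : MvPowerSeries σ R) :
    coeff m (X i ^ k * φ) = 0 := by
  classical
  rw [X_pow_eq, coeff_monomial_mul, if_neg]
  intro hle
  have := hle i
  simp only [Finsupp.single_eq_same] at this
  omega


namespace Stmt10

/-- `u`, `v`, `y`, `t` in `S = ℚ⟦u,v,y,t⟧`. -/
noncomputable def u : MvPowerSeries (Fin 4) ℚ := MvPowerSeries.X 0
noncomputable def v : MvPowerSeries (Fin 4) ℚ := MvPowerSeries.X 1
noncomputable def y : MvPowerSeries (Fin 4) ℚ := MvPowerSeries.X 2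
noncomputable def t : MvPowerSeries (Fin 4) ℚ := MvPowerSeries.X 3

/-- `G`: the coefficient of `u^a v^ℓ y^b t^n` is the number of ascent sequences of
length `n` with `a` ascents, last letter `ℓ` (the empty sequence having last letter `0`,
so the coefficient of `t^0` is `1`) and `b` equal pairs. -/
noncomputable def G : MvPowerSeries (Fin 4) ℚ := fun m =>
  (Nat.card {l : List ℕ // l.length = m 3 ∧ IsAscentSeq l ∧
    ascList l = m 0 ∧ l.getLastD 0 = m 1 ∧ adjpairs l = m 2} : ℚ)

noncomputable def Δ (k : ℕ) : MvPowerSeries (Fin 4) ℚ :=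
  (1 - t * y) ^ k * (1 - u) + u * (1 + t - t * y) ^ k

noncomputable def Δb (k : ℕ) : MvPowerSeries (Fin 4) ℚ :=
  (1 - t * y) ^ k * (1 - u * v) + u * v * (1 + t - t * y) ^ k

noncomputable def Γ (k : ℕ) : MvPowerSeries (Fin 4) ℚ :=
  u * (1 + t - t * y) ^ k * (Δ k)⁻¹

noncomputable def Γb (k : ℕ) : MvPowerSeries (Fin 4) ℚ :=
  u * v * (1 + t - t * y) ^ k * (Δb k)⁻¹

noncomputable def D : MvPowerSeries (Fin 4) ℚ :=
  v - 1 - t - t * y * v + t * y + t * u * v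

local notation "S" => MvPowerSeries (Fin 4) ℚ

theorem t_isLeftRegular : IsLeftRegular t :=
  IsLeftCancelMulZero.mul_left_cancel_of_ne_zero
    (nonZeroDivisors.ne_zero MvPowerSeries.X_mem_nonzeroDivisors)

noncomputable def delta (p : S) (k : ℕ) : S :=
  (1 - t * y) ^ k * (1 - p) + p * (1 + t - t * y) ^ k

noncomputable def gamma (p : S) (k : ℕ) : S :=
  p * (1 + t - t * y) ^ k * (delta p k)⁻¹

/-- The kernel root at `w = gamma p k` is `1 + t ⬝ rootExcess p k`. -/
noncomputable def rootExcess (p : S) (k : ℕ) : S :=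
  (1 - t * y) ^ k * (1 - p) * (delta p (k + 1))⁻¹

noncomputable def seriesTerm (p : S) (n : ℕ) : S :=
  (1 - t * y) ^ n * (1 + t - t * y) ^ n *
    ((1 - p) * (∏ i ∈ Icc 1 n, gamma p i) * (delta p n)⁻¹ * (delta p (n + 1))⁻¹)

theorem delta_zero (p : S) : delta p 0 = 1 := by
  simp [delta]

theorem delta_succ (p : S) (k : ℕ) :
    delta p (k + 1) = (1 + t - t * y) * delta p k - t * (1 - t * y) ^ k * (1 - p) := by
  unfold delta
  ring

theorem delta_mul_inv {p : S} (hp : MvPowerSeries.constantCoeff p = 0) (k : ℕ) :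
    delta p k * (delta p k)⁻¹ = 1 :=
  MvPowerSeries.mul_inv_cancel _ (by simp [delta, hp, t, y])

theorem gamma_zero (p : S) : gamma p 0 = p := by
  simp [gamma, delta_zero]

theorem one_add_mul_rootExcess {p : S} (hp : MvPowerSeries.constantCoeff p = 0) (k : ℕ) :
    1 + t * rootExcess p k = (1 + t - t * y) * delta p k * (delta p (k + 1))⁻¹ := by
  rw [rootExcess]
  linear_combination -(delta_mul_inv hp (k + 1)) + (delta p (k + 1))⁻¹ * delta_succ p k

theorem gamma_succ {p : S} (hp : MvPowerSeries.constantCoeff p = 0) (k : ℕ) :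
    gamma p (k + 1) = gamma p k * (1 + t * rootExcess p k) := by
  rw [one_add_mul_rootExcess hp, gamma, gamma]
  linear_combination -(p * (1 + t - t * y) ^ (k + 1) * (delta p (k + 1))⁻¹) * delta_mul_inv hp k

theorem rootExcess_mul_add_gamma_succ {p : S} (hp : MvPowerSeries.constantCoeff p = 0) (k : ℕ) :
    rootExcess p k * (1 - t * y) + gamma p (k + 1) = 1 := by
  have hdef : delta p (k + 1) = (1 - t * y) ^ (k + 1) * (1 - p) + p * (1 + t - t * y) ^ (k + 1) :=
    rfl
  rw [rootExcess, gamma]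
  linear_combination delta_mul_inv hp (k + 1) - (delta p (k + 1))⁻¹ * hdef

theorem prod_one_add_mul_rootExcess {p : S} (hp : MvPowerSeries.constantCoeff p = 0) (n : ℕ) :
    ∏ k ∈ range n, (1 + t * rootExcess p k) = (1 + t - t * y) ^ n * (delta p n)⁻¹ := by
  induction n with
  | zero => simp [delta_zero]
  | succ n ih =>
    rw [prod_range_succ, ih, one_add_mul_rootExcess hp]
    linear_combination
      (1 + t - t * y) ^ (n + 1) * (delta p (n + 1))⁻¹ * delta_mul_inv hp n

theorem prod_gamma_mul_sq {p : S} (hp : MvPowerSeries.constantCoeff p = 0) (n : ℕ) :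
    ∏ k ∈ range n, gamma p k * (1 + t * rootExcess p k) ^ 2 =
      (1 + t - t * y) ^ n * (∏ i ∈ Icc 1 n, gamma p i) * (delta p n)⁻¹ := by
  have hshift : ∏ k ∈ range n, gamma p (k + 1) = ∏ i ∈ Icc 1 n, gamma p i := by
    rw [range_eq_Ico, prod_Ico_add', Ico_add_one_right_eq_Icc]
  simp only [sq, ← mul_assoc, ← gamma_succ hp, prod_mul_distrib, hshift,
    prod_one_add_mul_rootExcess hp]
  ring

theorem ascGF_one_eq_sum_seriesTerm {p : S} (hp : MvPowerSeries.constantCoeff p = 0)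
    (M N : ℕ) :
    ∃ A B : S, ascGF t p 1 y M =
      t * ∑ n ∈ range N, seriesTerm p n + p ^ N * A + t ^ (M + 1) * B := by
  obtain ⟨r, hr⟩ := ascGF_telescope t_isLeftRegular y (gamma p) (rootExcess p) (gamma_succ hp)
    (rootExcess_mul_add_gamma_succ hp) M N
  have hterm : ∀ n, (∏ k ∈ range n, gamma p k * (1 + t * rootExcess p k) ^ 2) *
      (t * rootExcess p n) = t * seriesTerm p n := fun n => by
    rw [prod_gamma_mul_sq hp, rootExcess, seriesTerm]
    ring
  have hfactor : ∀ k, gamma p k * (1 + t * rootExcess p k) ^ 2 =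
      p * ((1 + t - t * y) ^ k * (delta p k)⁻¹ * (1 + t * rootExcess p k) ^ 2) := fun k => by
    rw [gamma]
    ring
  rw [gamma_zero, sum_congr rfl fun n _ => hterm n, ← mul_sum,
    prod_congr rfl fun k _ => hfactor k, prod_mul_distrib, prod_const, card_range, mul_assoc] at hr
  exact ⟨_, r, hr⟩

theorem one_add_ascGF_eq_closed_form (M N : ℕ) :
    ∃ A B : S, 1 + ascGF t u v y M =
      1 + t * D⁻¹ * ((v - 1) - t *
        ∑ n ∈ range N, (seriesTerm u n - u * v ^ 2 * seriesTerm (u * v) n)) +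
        u ^ N * A + t ^ (M + 1) * B := by
  have hu : MvPowerSeries.constantCoeff u = 0 := by simp [u]
  have huv : MvPowerSeries.constantCoeff (u * v) = 0 := by simp [u]
  have hD : D⁻¹ * D = 1 := MvPowerSeries.inv_mul_cancel _ (by simp [D, u, v, t, y])
  have hK : D * ascGF t u v y M = _ := kernel_mul_ascGF t u v y M
  obtain ⟨A₁, B₁, h₁⟩ := ascGF_one_eq_sum_seriesTerm hu M N
  obtain ⟨A₂, B₂, h₂⟩ := ascGF_one_eq_sum_seriesTerm huv M N
  refine ⟨D⁻¹ * (t * u * v ^ 2 * v ^ N * A₂ - t * A₁),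
    D⁻¹ * (t * u * v ^ 2 * B₂ - t * B₁ - (v - 1) * ascPoly u v y (M + 1)), ?_⟩
  rw [sum_sub_distrib, ← mul_sum]
  linear_combination
    D⁻¹ * hK - t * D⁻¹ * h₁ + t * u * v ^ 2 * D⁻¹ * h₂ - ascGF t u v y M * hD

theorem coeff_t_pow_mul_monomial (m : Fin 4 →₀ ℕ) (n a l b : ℕ) :
    MvPowerSeries.coeff m (t ^ n * (u ^ a * v ^ l * y ^ b)) =
      if n = m 3 ∧ a = m 0 ∧ l = m 1 ∧ b = m 2 then 1 else 0 := by
  simp only [t, u, v, y, MvPowerSeries.X_pow_eq, MvPowerSeries.monomial_mul_monomial, one_mul,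
    MvPowerSeries.coeff_monomial]
  congr 1
  simp [Finsupp.ext_iff, Fin.forall_fin_succ, Finsupp.single_apply]
  tauto

theorem coeff_G (m : Fin 4 →₀ ℕ) :
    MvPowerSeries.coeff m G = MvPowerSeries.coeff m (1 + ascGF t u v y (m 3)) := by
  classical
  rw [one_add_ascGF, map_sum]
  simp only [ascPoly, mul_sum, map_sum, coeff_t_pow_mul_monomial, ite_and, sum_ite_irrel,
    sum_const_zero]
  rw [sum_ite_eq', if_pos (self_mem_range_succ _)]
  simp only [← ite_and]
  rw [sum_boole]
  show (Nat.card _ : ℚ) = _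
  rw [← Nat.card_eq_finsetCard]
  congr
  ext l
  simp only [mem_filter, mem_ascFinset, and_assoc]

theorem Δ_eq : Δ = delta u := rfl

theorem Δb_eq : Δb = delta (u * v) := rfl

theorem Γ_eq : Γ = gamma u := rfl

theorem Γb_eq : Γb = gamma (u * v) := rfl

/-- The infinite sum is represented by its partial sums over `n < N` with `N > m 0`: the `n`-th
summand is divisible by `uⁿ`. -/
theorem stmt_10 (m : Fin 4 →₀ ℕ) (N : ℕ) (hN : m 0 < N) :
    MvPowerSeries.coeff m G =
      MvPowerSeries.coeff m
        (1 + t * D⁻¹ * ((v - 1) - t *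
          ∑ n ∈ Finset.range N,
            (1 - t * y) ^ n * (1 + t - t * y) ^ n *
              ((1 - u) * (∏ i ∈ Finset.Icc 1 n, Γ i) * (Δ n)⁻¹ * (Δ (n + 1))⁻¹ -
                u * v ^ 2 * (1 - u * v) *
                  (∏ i ∈ Finset.Icc 1 n, Γb i) * (Δb n)⁻¹ * (Δb (n + 1))⁻¹))) := by
  obtain ⟨A, B, h⟩ := one_add_ascGF_eq_closed_form (m 3) N
  have hterm : ∀ n, (1 - t * y) ^ n * (1 + t - t * y) ^ n *
      ((1 - u) * (∏ i ∈ Icc 1 n, Γ i) * (Δ n)⁻¹ * (Δ (n + 1))⁻¹ -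
        u * v ^ 2 * (1 - u * v) * (∏ i ∈ Icc 1 n, Γb i) * (Δb n)⁻¹ * (Δb (n + 1))⁻¹) =
      seriesTerm u n - u * v ^ 2 * seriesTerm (u * v) n := fun n => by
    rw [seriesTerm, seriesTerm, Δ_eq, Δb_eq, Γ_eq, Γb_eq]
    ring
  have hu : MvPowerSeries.coeff m (u ^ N * A) = 0 :=
    MvPowerSeries.coeff_X_pow_mul_eq_zero hN A
  have ht : MvPowerSeries.coeff m (t ^ (m 3 + 1) * B) = 0 :=
    MvPowerSeries.coeff_X_pow_mul_eq_zero (Nat.lt_succ_self _) B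
  rw [coeff_G, h, map_add, map_add, hu, ht, add_zero, add_zero, sum_congr rfl fun n _ => hterm n]

end Stmt10
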